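/- Let ν = (ν_0, …, ν_n) be a lattice path, δ an increment vector for ν, and ν̌ = (ν̌_0, δ_1, …, δ_n) with ν̌_0 = Σ_{i=0}^n ν_i − Σ_{i=1}^n δ_i. Then the alt ν-Tamari poset T_ν(δ) equals the interval [ν, 1^ν] in the ν̌-Tamari lattice Tam(ν̌), where 1^ν = N^n E^m is the top path. Precisely: a ν̌-path μ satisfies ν ≤ μ in Tam(ν̌) if and only if μ is a ν-path (lies weakly above ν), and for ν-paths P, Q one has P ≤ Q in T_ν(δ) if and only if P ≤ Q in Tam(ν̌). -/

import Mathlib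

/-!
Common definitions for the paper "The alt ν-Tamari lattices".

A lattice path ν from (0,0) to (m,n) is encoded as the list (ν_0, ..., ν_n)
of its east-step block lengths (ν_0 initial east steps, ν_i the east steps
immediately following the i-th north step).  Thus `ν.length = n + 1` and
`ν.sum = m`.
-/

/-- `μ` is a ν-path: same endpoints as `ν` and weakly above `ν`. -/
def IsNuPath (ν μ : List ℕ) : Prop :=
  μ.length = ν.length ∧ (∀ j : ℕ, (μ.take j).sum ≤ (ν.take j).sum) ∧ μ.sum = ν.sum

/-! ### The ν-Dyck lattice -/

/-- The Dyck order: `P ≤ Q` iff `Q` lies weakly above `P`. -/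
def dyckLE (P Q : List ℕ) : Prop := ∀ j : ℕ, (Q.take j).sum ≤ (P.take j).sum

/-- Covering relation of the ν-Dyck lattice. -/
def dyckCovBy (ν P Q : List ℕ) : Prop :=
  IsNuPath ν P ∧ IsNuPath ν Q ∧ dyckLE P Q ∧ P ≠ Q ∧
    ∀ R, IsNuPath ν R → dyckLE P R → dyckLE R Q → R = P ∨ R = Q

/-- `[P,Q]` is a linear interval of length `ℓ` in the ν-Dyck lattice:
the interval is totally ordered and there is a maximal chain of length `ℓ`
from `P` to `Q`. -/
def IsDyckLinear (ν P Q : List ℕ) (ℓ : ℕ) : Prop :=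
  IsNuPath ν P ∧ IsNuPath ν Q ∧ dyckLE P Q ∧
  (∀ R S, IsNuPath ν R → IsNuPath ν S → dyckLE P R → dyckLE R Q →
    dyckLE P S → dyckLE S Q → dyckLE R S ∨ dyckLE S R) ∧
  ∃ c : ℕ → List ℕ, c 0 = P ∧ c ℓ = Q ∧ ∀ k, k < ℓ → dyckCovBy ν (c k) (c (k + 1))

/-- `[P,Q]` is a left interval in the ν-Dyck lattice: `Q` is obtained from `P`
by replacing a consecutive subword `E^ℓ N` by `N E^ℓ` (the `ℓ` east steps are
moved from the block before the `(i+1)`-st north step to the block after it). -/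
def IsLeftDyck (ν P Q : List ℕ) (ℓ : ℕ) : Prop :=
  IsNuPath ν P ∧ IsNuPath ν Q ∧ 1 ≤ ℓ ∧
  ∃ i, i + 1 < P.length ∧ ℓ ≤ P.getD i 0 ∧
    Q = (P.set i (P.getD i 0 - ℓ)).set (i + 1) (P.getD (i + 1) 0 + ℓ)

/-- `[P,Q]` is a right interval in the ν-Dyck lattice: `Q` is obtained from `P`
by replacing a consecutive subword `E N^ℓ` by `N^ℓ E`. -/
def IsRightDyck (ν P Q : List ℕ) (ℓ : ℕ) : Prop :=
  IsNuPath ν P ∧ IsNuPath ν Q ∧ 1 ≤ ℓ ∧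
  ∃ i, i + ℓ < P.length ∧ 1 ≤ P.getD i 0 ∧ (∀ j, i < j → j < i + ℓ → P.getD j 0 = 0) ∧
    Q = (P.set i (P.getD i 0 - 1)).set (i + ℓ) (P.getD (i + ℓ) 0 + 1)

/-! ### Increment vectors, δ-rotations and alt ν-Tamari posets -/

/-- `δ = (δ_1, …, δ_n)` is an increment vector with respect to `ν`:
`δ_i ≤ ν_i` for `1 ≤ i ≤ n`.  (List index `i` of `δ` holds `δ_{i+1}`.) -/
def IsIncrement (ν δ : List ℕ) : Prop :=
  δ.length + 1 = ν.length ∧ ∀ i, i < δ.length → δ.getD i 0 ≤ ν.getD (i + 1) 0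

/-- `μ'` is the δ-rotation of `μ` at the valley preceding the `(i+1)`-st north
step.  The δ-excursion starting with the `(i+1)`-st north step ends in block `k`
(the first block where the δ-altitude returns to its value at the valley), and
the east step of the valley is exchanged with this excursion, i.e. moved from
block `i` to block `k`. -/
def IsDeltaRotation (δ μ μ' : List ℕ) (i : ℕ) : Prop :=
  i + 1 < μ.length ∧ 1 ≤ μ.getD i 0 ∧
  ∃ k, i < k ∧ k < μ.length ∧
    (∑ t ∈ Finset.Ico i k, δ.getD t 0) ≤ (∑ t ∈ Finset.Ico (i + 1) (k + 1), μ.getD t 0) ∧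
    (∀ k', i < k' → k' < k →
      (∑ t ∈ Finset.Ico (i + 1) (k' + 1), μ.getD t 0) < (∑ t ∈ Finset.Ico i k', δ.getD t 0)) ∧
    μ' = (μ.set i (μ.getD i 0 - 1)).set k (μ.getD k 0 + 1)

/-- `Q` is obtained from `P` by a δ-rotation at some valley. -/
def DRot (δ P Q : List ℕ) : Prop := ∃ i, IsDeltaRotation δ P Q i

/-- The alt ν-Tamari order: reflexive transitive closure of δ-rotations. -/
def altLE (δ : List ℕ) : List ℕ → List ℕ → Prop := Relation.ReflTransGen (DRot δ)

/-- The path ν̌ = (ν̌_0, δ_1, …, δ_n) with ν̌_0 = Σν_i − Σδ_i. -/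
def nuCheck (ν δ : List ℕ) : List ℕ := (ν.sum - δ.sum) :: δ

/-- `μ'` is the ω-rotation (in the sense of the ν-Tamari lattice, defined via
the ω-altitude `alt_ω(x,y) = ω_0 + ⋯ + ω_y − x`) of `μ` at the valley preceding
the `(i+1)`-st north step: the east step of the valley is exchanged with the
subpath from the valley to the next lattice point of the same ω-altitude,
which ends in block `k`. -/
def IsNuRotation (ω μ μ' : List ℕ) (i : ℕ) : Prop :=
  i + 1 < μ.length ∧ 1 ≤ μ.getD i 0 ∧
  ∃ k, i < k ∧ k < μ.length ∧
    (ω.take (k + 1)).sum + (μ.take (i + 1)).sum ≤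
      (ω.take (i + 1)).sum + (μ.take (k + 1)).sum ∧
    (∀ k', i < k' → k' < k →
      (ω.take (i + 1)).sum + (μ.take (k' + 1)).sum <
        (ω.take (k' + 1)).sum + (μ.take (i + 1)).sum) ∧
    μ' = (μ.set i (μ.getD i 0 - 1)).set k (μ.getD k 0 + 1)

/-- The ω-Tamari order on ω-paths: closure of ω-rotations. -/
def tamLE (ω : List ℕ) : List ℕ → List ℕ → Prop :=
  Relation.ReflTransGen (fun P Q => ∃ i, IsNuRotation ω P Q i)

/-- Covering relation of the alt ν-Tamari poset `T_ν(δ)`. -/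
def altCovBy (ν δ P Q : List ℕ) : Prop :=
  IsNuPath ν P ∧ IsNuPath ν Q ∧ altLE δ P Q ∧ P ≠ Q ∧
    ∀ R, IsNuPath ν R → altLE δ P R → altLE δ R Q → R = P ∨ R = Q

/-- `[P,Q]` is a linear interval of length `ℓ` in the alt ν-Tamari poset. -/
def IsAltLinear (ν δ P Q : List ℕ) (ℓ : ℕ) : Prop :=
  IsNuPath ν P ∧ IsNuPath ν Q ∧ altLE δ P Q ∧
  (∀ R S, IsNuPath ν R → IsNuPath ν S → altLE δ P R → altLE δ R Q →
    altLE δ P S → altLE δ S Q → altLE δ R S ∨ altLE δ S R) ∧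
  ∃ c : ℕ → List ℕ, c 0 = P ∧ c ℓ = Q ∧ ∀ k, k < ℓ → altCovBy ν δ (c k) (c (k + 1))

/-! ### ω-trees -/

/-- The lattice points of the Ferrers diagram `F_ω` weakly above `ω`:
points `(x,y)` with `0 ≤ y ≤ n` and `x ≤ ω_0 + ⋯ + ω_y`. -/
def Lpts (ω : List ℕ) : Set (ℕ × ℕ) :=
  {p : ℕ × ℕ | p.2 < ω.length ∧ p.1 ≤ (ω.take (p.2 + 1)).sum}

/-- `p` and `q` are ω-incompatible: one is strictly southwest of the other and
the smallest rectangle containing them lies in `F_ω` (equivalently, its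
bottom-right corner is a lattice point of `F_ω`). -/
def Incomp (ω : List ℕ) (p q : ℕ × ℕ) : Prop :=
  ((p.1 < q.1 ∧ p.2 < q.2) ∨ (q.1 < p.1 ∧ q.2 < p.2)) ∧
    (max p.1 q.1, min p.2 q.2) ∈ Lpts ω

/-- All elements of `T` are pairwise ω-compatible. -/
def PairwiseCompat (ω : List ℕ) (T : Set (ℕ × ℕ)) : Prop :=
  ∀ p ∈ T, ∀ q ∈ T, ¬ Incomp ω p q

/-- An ω-tree: a maximal collection of pairwise ω-compatible points of `L_ω`. -/
def IsTree (ω : List ℕ) (T : Set (ℕ × ℕ)) : Prop :=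
  T ⊆ Lpts ω ∧ PairwiseCompat ω T ∧
    ∀ T', T ⊆ T' → T' ⊆ Lpts ω → PairwiseCompat ω T' → T' = T

/-- The ω-rotation of `T` at `q`: there are `p, r ∈ T` with `q` the lower-left
corner of the rectangle `p□r` (so `p` is above `q` in its column and `r` to the
right of `q` in its row), no other element of `T` lies in `p□r`, and `T'` is
obtained by replacing `q` by the upper-right corner of `p□r`. -/
def RotationAt (ω : List ℕ) (T : Set (ℕ × ℕ)) (q : ℕ × ℕ) (T' : Set (ℕ × ℕ)) : Prop :=
  ∃ p r, p ∈ T ∧ q ∈ T ∧ r ∈ T ∧ p.1 = q.1 ∧ q.2 < p.2 ∧ r.2 = q.2 ∧ q.1 < r.1 ∧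
    (∀ s ∈ T, q.1 ≤ s.1 → s.1 ≤ r.1 → q.2 ≤ s.2 → s.2 ≤ p.2 → s = p ∨ s = q ∨ s = r) ∧
    T' = insert (r.1, p.2) (T \ {q})

/-- `T'` is obtained from `T` by an ω-rotation. -/
def TreeRotation (ω : List ℕ) (T T' : Set (ℕ × ℕ)) : Prop := ∃ q, RotationAt ω T q T'

/-- One rotation step between ω-trees. -/
def tRot (ω : List ℕ) (T T' : Set (ℕ × ℕ)) : Prop :=
  IsTree ω T ∧ IsTree ω T' ∧ TreeRotation ω T T'

/-- The rotation order on ω-trees. -/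
def treeLE (ω : List ℕ) : Set (ℕ × ℕ) → Set (ℕ × ℕ) → Prop :=
  Relation.ReflTransGen (tRot ω)

/-- Covering relation of the rotation poset of ω-trees. -/
def treeCovBy (ω : List ℕ) (T T' : Set (ℕ × ℕ)) : Prop :=
  IsTree ω T ∧ IsTree ω T' ∧ treeLE ω T T' ∧ T ≠ T' ∧
    ∀ R, IsTree ω R → treeLE ω T R → treeLE ω R T' → R = T ∨ R = T'

/-- `[T,T']` is a linear interval of length `ℓ` in the rotation poset of ω-trees. -/
def IsTreeLinear (ω : List ℕ) (T T' : Set (ℕ × ℕ)) (ℓ : ℕ) : Prop :=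
  IsTree ω T ∧ IsTree ω T' ∧ treeLE ω T T' ∧
  (∀ R S, IsTree ω R → IsTree ω S → treeLE ω T R → treeLE ω R T' →
    treeLE ω T S → treeLE ω S T' → treeLE ω R S ∨ treeLE ω S R) ∧
  ∃ c : ℕ → Set (ℕ × ℕ), c 0 = T ∧ c ℓ = T' ∧ ∀ k, k < ℓ → treeCovBy ω (c k) (c (k + 1))

/-- `q 0, …, q ℓ` is a sequence of consecutive nodes of `T` in the same row,
ordered from left to right. -/
def ConsecRow (T : Set (ℕ × ℕ)) (q : ℕ → ℕ × ℕ) (ℓ : ℕ) : Prop :=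
  (∀ i, i ≤ ℓ → q i ∈ T) ∧ (∀ i, i ≤ ℓ → (q i).2 = (q 0).2) ∧
  (∀ i, i < ℓ → (q i).1 < (q (i + 1)).1) ∧
  (∀ i, i < ℓ → ∀ s ∈ T, s.2 = (q 0).2 → (q i).1 < s.1 → s.1 < (q (i + 1)).1 → False)

/-- `q 0, …, q ℓ` is a sequence of consecutive nodes of `T` in the same column,
ordered from bottom to top. -/
def ConsecCol (T : Set (ℕ × ℕ)) (q : ℕ → ℕ × ℕ) (ℓ : ℕ) : Prop :=
  (∀ i, i ≤ ℓ → q i ∈ T) ∧ (∀ i, i ≤ ℓ → (q i).1 = (q 0).1) ∧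
  (∀ i, i < ℓ → (q i).2 < (q (i + 1)).2) ∧
  (∀ i, i < ℓ → ∀ s ∈ T, s.1 = (q 0).1 → (q i).2 < s.2 → s.2 < (q (i + 1)).2 → False)

/-- `[T,T']` is a left interval of length `ℓ` in the rotation poset of ω-trees:
`T'` is obtained from `T` by applying `ℓ > 0` successive rotations at the first
`ℓ` nodes of a sequence `q 0, …, q ℓ` of consecutive nodes of `T` in the same
row, from left to right. -/
def IsLeftTreeItv (ω : List ℕ) (T T' : Set (ℕ × ℕ)) (ℓ : ℕ) : Prop :=
  IsTree ω T ∧ 1 ≤ ℓ ∧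
  ∃ q : ℕ → ℕ × ℕ, ConsecRow T q ℓ ∧
    ∃ c : ℕ → Set (ℕ × ℕ), c 0 = T ∧ c ℓ = T' ∧
      ∀ k, k < ℓ → RotationAt ω (c k) (q k) (c (k + 1))

/-- `[T,T']` is a right interval of length `ℓ` in the rotation poset of ω-trees:
`T'` is obtained from `T` by applying `ℓ > 0` successive rotations at the first
`ℓ` nodes of a sequence `q 0, …, q ℓ` of consecutive nodes of `T` in the same
column, from bottom to top. -/
def IsRightTreeItv (ω : List ℕ) (T T' : Set (ℕ × ℕ)) (ℓ : ℕ) : Prop :=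
  IsTree ω T ∧ 1 ≤ ℓ ∧
  ∃ q : ℕ → ℕ × ℕ, ConsecCol T q ℓ ∧
    ∃ c : ℕ → Set (ℕ × ℕ), c 0 = T ∧ c ℓ = T' ∧
      ∀ k, k < ℓ → RotationAt ω (c k) (q k) (c (k + 1))

/-! ### (δ,ν)-trees -/

/-- The lattice points `L_{δ,ν}` of the shape `F_{δ,ν}`: points of `L_ν̌` lying
weakly above the path ν̂ = W^{ν_0} N W^{ν_1−δ_1} ⋯ N W^{ν_n−δ_n} starting at
`(ν̌_0, 0)`.  At height `y` these are the `x` with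
`ν̌_0 − ν_0 − Σ_{i≤y}(ν_i−δ_i) ≤ x ≤ ν̌_0 + δ_1 + ⋯ + δ_y`, written here without
natural subtraction. -/
def Ldn (ν δ : List ℕ) : Set (ℕ × ℕ) :=
  {p : ℕ × ℕ | p.2 < ν.length ∧
    ν.sum ≤ p.1 + (ν.take (p.2 + 1)).sum + (δ.drop p.2).sum ∧
    p.1 ≤ ((nuCheck ν δ).take (p.2 + 1)).sum}

/-- A (δ,ν)-tree: a maximal collection of pairwise ν̌-compatible points of `L_{δ,ν}`. -/
def IsDNTree (ν δ : List ℕ) (T : Set (ℕ × ℕ)) : Prop :=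
  T ⊆ Ldn ν δ ∧ PairwiseCompat (nuCheck ν δ) T ∧
    ∀ T', T ⊆ T' → T' ⊆ Ldn ν δ → PairwiseCompat (nuCheck ν δ) T' → T' = T

/-- One ν̌-rotation step between (δ,ν)-trees. -/
def dnRot (ν δ : List ℕ) (T T' : Set (ℕ × ℕ)) : Prop :=
  IsDNTree ν δ T ∧ IsDNTree ν δ T' ∧ TreeRotation (nuCheck ν δ) T T'

/-- The rotation order on (δ,ν)-trees. -/
def dnLE (ν δ : List ℕ) : Set (ℕ × ℕ) → Set (ℕ × ℕ) → Prop :=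
  Relation.ReflTransGen (dnRot ν δ)

/-- Covering relation of the rotation poset of (δ,ν)-trees. -/
def dnCovBy (ν δ : List ℕ) (T T' : Set (ℕ × ℕ)) : Prop :=
  IsDNTree ν δ T ∧ IsDNTree ν δ T' ∧ dnLE ν δ T T' ∧ T ≠ T' ∧
    ∀ R, IsDNTree ν δ R → dnLE ν δ T R → dnLE ν δ R T' → R = T ∨ R = T'

/-- `[T,T']` is a left interval of length `ℓ` in the rotation poset of (δ,ν)-trees. -/
def IsLeftDNItv (ν δ : List ℕ) (T T' : Set (ℕ × ℕ)) (ℓ : ℕ) : Prop :=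
  IsDNTree ν δ T ∧ 1 ≤ ℓ ∧
  ∃ q : ℕ → ℕ × ℕ, ConsecRow T q ℓ ∧
    ∃ c : ℕ → Set (ℕ × ℕ), c 0 = T ∧ c ℓ = T' ∧
      ∀ k, k < ℓ → RotationAt (nuCheck ν δ) (c k) (q k) (c (k + 1))

/-- `[T,T']` is a right interval of length `ℓ` in the rotation poset of (δ,ν)-trees. -/
def IsRightDNItv (ν δ : List ℕ) (T T' : Set (ℕ × ℕ)) (ℓ : ℕ) : Prop :=
  IsDNTree ν δ T ∧ 1 ≤ ℓ ∧
  ∃ q : ℕ → ℕ × ℕ, ConsecCol T q ℓ ∧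
    ∃ c : ℕ → Set (ℕ × ℕ), c 0 = T ∧ c ℓ = T' ∧
      ∀ k, k < ℓ → RotationAt (nuCheck ν δ) (c k) (q k) (c (k + 1))

/-! ### Row vectors, column vectors, reduced column vectors -/

/-- Number of points of `T` at height `y`. -/
noncomputable def rowN (T : Set (ℕ × ℕ)) (y : ℕ) : ℕ := {p ∈ T | p.2 = y}.ncard

/-- Number of points of `T` in column `x`. -/
noncomputable def colTN (T : Set (ℕ × ℕ)) (x : ℕ) : ℕ := {p ∈ T | p.1 = x}.ncard

/-- Number of points of `L_{δ,ν}` in column `x`. -/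
noncomputable def colN (ν δ : List ℕ) (x : ℕ) : ℕ := {p ∈ Ldn ν δ | p.1 = x}.ncard

/-- `p` is a relevant point of `L_{δ,ν}`: it is not the leftmost point of its row. -/
def Relevant (ν δ : List ℕ) (p : ℕ × ℕ) : Prop :=
  p ∈ Ldn ν δ ∧ ∃ q ∈ Ldn ν δ, q.2 = p.2 ∧ q.1 < p.1

/-- Number of relevant points of `L_{δ,ν}` in column `x` (the reduced column at `x`). -/
noncomputable def rcolN (ν δ : List ℕ) (x : ℕ) : ℕ := {p ∈ Ldn ν δ | p.1 = x ∧ Relevant ν δ p}.ncard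

/-- Number of points of `T` in the reduced column at `x`. -/
noncomputable def rcolTN (ν δ : List ℕ) (T : Set (ℕ × ℕ)) (x : ℕ) : ℕ :=
  {p ∈ T | p.1 = x ∧ Relevant ν δ p}.ncard

/-- `j` lists the columns `j 0, …, j m` of `L_{δ,ν}` from shortest to longest,
reading from right to left among columns of equal length (here `m = ν.sum`). -/
def ColOrder (ν δ : List ℕ) (j : ℕ → ℕ) : Prop :=
  (∀ i, i ≤ ν.sum → j i ≤ ν.sum) ∧
  (∀ i i', i ≤ ν.sum → i' ≤ ν.sum → j i = j i' → i = i') ∧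
  (∀ i i', i < i' → i' ≤ ν.sum →
    colN ν δ (j i) < colN ν δ (j i') ∨ (colN ν δ (j i) = colN ν δ (j i') ∧ j i' < j i))

/-- `j` lists the reduced columns `j 0, …, j (m-1)` of `L_{δ,ν}` from shortest to
longest, reading from right to left among reduced columns of equal length. -/
def RColOrder (ν δ : List ℕ) (j : ℕ → ℕ) : Prop :=
  (∀ i, i < ν.sum → 1 ≤ j i ∧ j i ≤ ν.sum) ∧
  (∀ i i', i < ν.sum → i' < ν.sum → j i = j i' → i = i') ∧
  (∀ i i', i < i' → i' < ν.sum →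
    rcolN ν δ (j i) < rcolN ν δ (j i') ∨ (rcolN ν δ (j i) = rcolN ν δ (j i') ∧ j i' < j i))

/-- The entry `←ν_i` of the reversed path of `ν`: the number of north steps of
`ν` in column `m − i`. -/
def revNu (ν : List ℕ) (i : ℕ) : ℕ :=
  ((Finset.Ico 1 ν.length).filter (fun t => (ν.take t).sum + i = ν.sum)).card

/-!
Since ν̌ = (ν̌₀, δ₁, …, δₙ), the ν̌-altitude of a lattice point is its δ-altitude shifted by the
constant ν̌₀, so δ-rotations and ν̌-rotations are the same moves and `T_ν(δ)` and `Tam(ν̌)` are the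
same relation. A rotation moves one east step to a later block, so it keeps a path weakly above ν.

Conversely, δᵢ ≤ νᵢ says that the ν̌-altitude never increases along ν. Given a ν-path μ ≠ ν, pick
a block `i₀` after which μ is strictly above ν, let `k` be the first later block where the altitude
of μ drops below its value at `i₀`, and `i` the last block before `k` at that value. Between `i₀`
and `k` the altitude of μ stays at least its value at `i₀` while that of ν does not increase, so μ
stays strictly above ν there; hence moving one east step of μ from block `k` back to block `i`
gives a ν-path, and the rotation of that path at `i` is μ. This predecessor has larger area, so
induction on the area reaches every ν-path from ν.
-/

theorem exists_excursion_of_lt {α : Type*} [LinearOrder α] (f : ℕ → α) {i₀ n : ℕ}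
    (hn : i₀ < n) (hfn : f n < f i₀) :
    ∃ i k, i₀ ≤ i ∧ i < k ∧ k ≤ n ∧ f k < f i ∧ (∀ j, i < j → j < k → f i < f j) ∧
      ∀ j, i₀ ≤ j → j < k → f i₀ ≤ f j := by
  classical
  have hk : ∃ k, i₀ < k ∧ f k < f i₀ := ⟨n, hn, hfn⟩
  obtain ⟨hi₀k, hfk⟩ := Nat.find_spec hk
  set k := Nat.find hk
  have hk_min : ∀ j, i₀ ≤ j → j < k → f i₀ ≤ f j := by
    intro j h₁ h₂
    rcases h₁.eq_or_lt with rfl | h₁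
    · exact le_rfl
    · exact not_lt.1 fun h => Nat.find_min hk h₂ ⟨h₁, h⟩
  set i := Nat.findGreatest (fun j => f j ≤ f i₀) (k - 1)
  have hi₀i : i₀ ≤ i := Nat.le_findGreatest (by omega) le_rfl
  have hik : i < k := (Nat.findGreatest_le (k - 1)).trans_lt (by omega)
  have hfi : f i = f i₀ :=
    le_antisymm (Nat.findGreatest_spec (P := fun j => f j ≤ f i₀) (by omega) le_rfl)
      (hk_min i hi₀i hik)
  refine ⟨i, k, hi₀i, hik, Nat.find_min' hk ⟨hn, hfn⟩, hfi ▸ hfk, fun j h₁ h₂ => ?_, hk_min⟩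
  exact hfi ▸ lt_of_le_of_ne (hk_min j (by omega) h₂) fun h =>
    Nat.findGreatest_is_greatest h₁ (by omega) h.ge

theorem sum_take_succ_getD (l : List ℕ) (j : ℕ) :
    (l.take (j + 1)).sum = (l.take j).sum + l.getD j 0 := by
  rcases lt_or_ge j l.length with h | h
  · rw [List.sum_take_succ _ _ h, List.getD_eq_getElem _ _ h]
  · rw [List.take_of_length_le (by omega), List.take_of_length_le h,
      List.getD_eq_default _ _ h, add_zero]

theorem sum_take_add_sum_Ico (l : List ℕ) {a b : ℕ} (hab : a ≤ b) :
    (l.take a).sum + ∑ t ∈ Finset.Ico a b, l.getD t 0 = (l.take b).sum := by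
  induction b, hab using Nat.le_induction with
  | base => simp
  | succ b hab ih => rw [Finset.sum_Ico_succ_top hab, ← add_assoc, ih, sum_take_succ_getD]

theorem eq_of_sum_take_eq {l₁ l₂ : List ℕ} (hlen : l₁.length = l₂.length)
    (h : ∀ j, (l₁.take j).sum = (l₂.take j).sum) : l₁ = l₂ := by
  refine List.ext_getElem hlen fun j h₁ h₂ => ?_
  have := h (j + 1)
  rw [sum_take_succ_getD, sum_take_succ_getD, h j, List.getD_eq_getElem _ _ h₁,
    List.getD_eq_getElem _ _ h₂] at this
  omega

/-- On a path, `moveUnit μ a b` moves one east step from block `a` to block `b`; this is the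
shape of the rotations in `IsDeltaRotation` and `IsNuRotation`. -/
def moveUnit (l : List ℕ) (a b : ℕ) : List ℕ :=
  (l.set a (l.getD a 0 - 1)).set b (l.getD b 0 + 1)

@[simp]
theorem length_moveUnit (l : List ℕ) (a b : ℕ) : (moveUnit l a b).length = l.length := by
  simp [moveUnit]

theorem getD_moveUnit {l : List ℕ} {a b : ℕ} (hab : a ≠ b) (ha : a < l.length)
    (hb : b < l.length) (t : ℕ) :
    (moveUnit l a b).getD t 0 =
      if t = a then l.getD t 0 - 1 else if t = b then l.getD t 0 + 1 else l.getD t 0 := by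
  simp only [moveUnit, List.getD_eq_getElem?_getD, List.getElem?_set, List.length_set]
  rcases eq_or_ne t a with rfl | hta
  · simp [Ne.symm hab, ha]
  rcases eq_or_ne t b with rfl | htb
  · simp [hb, hta]
  simp [hta, htb, Ne.symm hta, Ne.symm htb]

theorem moveUnit_moveUnit {l : List ℕ} {a b : ℕ} (hab : a ≠ b) (ha : a < l.length)
    (hb : b < l.length) (h : 1 ≤ l.getD a 0) : moveUnit (moveUnit l a b) b a = l := by
  refine List.ext_getElem (by simp) fun t h₁ h₂ => ?_
  rw [← List.getD_eq_getElem _ 0 h₁, ← List.getD_eq_getElem _ 0 h₂,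
    getD_moveUnit hab.symm (by simpa) (by simpa), getD_moveUnit hab ha hb]
  split_ifs <;> subst_vars <;> omega

theorem sum_take_moveUnit {l : List ℕ} {a b : ℕ} (hab : a ≠ b) (ha : a < l.length)
    (hb : b < l.length) (h : 1 ≤ l.getD a 0) (j : ℕ) :
    ((moveUnit l a b).take j).sum + (if a < j then 1 else 0) =
      (l.take j).sum + (if b < j then 1 else 0) := by
  induction j with
  | zero => simp
  | succ j ih =>
    rw [sum_take_succ_getD, sum_take_succ_getD, getD_moveUnit hab ha hb]
    split_ifs at ih ⊢ <;> subst_vars <;> omega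

theorem sum_take_moveUnit_of_lt {l : List ℕ} {i k : ℕ} (hik : i < k) (hk : k < l.length)
    (h : 1 ≤ l.getD i 0) (j : ℕ) :
    ((moveUnit l i k).take j).sum + (if i < j ∧ j ≤ k then 1 else 0) = (l.take j).sum := by
  have := sum_take_moveUnit hik.ne (hik.trans hk) hk h j
  split_ifs at this ⊢ <;> omega

theorem sum_take_moveUnit_of_gt {l : List ℕ} {i k : ℕ} (hik : i < k) (hk : k < l.length)
    (h : 1 ≤ l.getD k 0) (j : ℕ) :
    ((moveUnit l k i).take j).sum = (l.take j).sum + (if i < j ∧ j ≤ k then 1 else 0) := by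
  have := sum_take_moveUnit hik.ne' hk (hik.trans hk) h j
  split_ifs at this ⊢ <;> omega

/-- The ω-altitude `alt_ω(x, y)` of the last lattice point `(x, y)` of `μ` at height `y = j`. -/
def altitude (ω μ : List ℕ) (j : ℕ) : ℤ := (ω.take (j + 1)).sum - (μ.take (j + 1)).sum

theorem altitude_succ (ω μ : List ℕ) (j : ℕ) :
    altitude ω μ (j + 1) = altitude ω μ j + ω.getD (j + 1) 0 - μ.getD (j + 1) 0 := by
  simp only [altitude, sum_take_succ_getD (j := j + 1)]
  push_cast
  ring

theorem IsNuRotation.exists_eq_moveUnit {ω P Q : List ℕ} {i : ℕ} (h : IsNuRotation ω P Q i) :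
    ∃ k, i < k ∧ k < P.length ∧ 1 ≤ P.getD i 0 ∧ Q = moveUnit P i k := by
  obtain ⟨-, hi, k, hik, hk, -, -, rfl⟩ := h
  exact ⟨k, hik, hk, hi, rfl⟩

theorem IsNuPath.of_isNuRotation {ν ω P Q : List ℕ} {i : ℕ} (hP : IsNuPath ν P)
    (h : IsNuRotation ω P Q i) : IsNuPath ν Q := by
  obtain ⟨k, hik, hk, hi, rfl⟩ := h.exists_eq_moveUnit
  obtain ⟨hlen, hle, hsum⟩ := hP
  have hM := sum_take_moveUnit_of_lt hik hk hi
  refine ⟨by simpa using hlen, fun j => (Nat.le_add_right _ _).trans ((hM j).trans_le (hle j)), ?_⟩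
  have := hM P.length
  rw [List.take_of_length_le le_rfl, List.take_of_length_le (by simp), if_neg (by omega)] at this
  omega

theorem isNuPath_of_tamLE {ν ω μ : List ℕ} (h : tamLE ω ν μ) : IsNuPath ν μ := by
  induction h with
  | refl => exact ⟨rfl, fun _ => le_rfl, rfl⟩
  | tail _ hrot ih => exact ih.of_isNuRotation hrot.choose_spec

def pathArea (l : List ℕ) : ℕ := ∑ j ∈ Finset.range l.length, (l.take j).sum

theorem IsNuRotation.pathArea_lt {ω P Q : List ℕ} {i : ℕ} (h : IsNuRotation ω P Q i) :
    pathArea Q < pathArea P := by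
  obtain ⟨k, hik, hk, hi, rfl⟩ := h.exists_eq_moveUnit
  have hM := sum_take_moveUnit_of_lt hik hk hi
  rw [pathArea, length_moveUnit]
  refine Finset.sum_lt_sum (fun j _ => (Nat.le_add_right _ _).trans (hM j).le)
    ⟨k, Finset.mem_range.2 hk, ?_⟩
  have := hM k
  rw [if_pos ⟨hik, le_rfl⟩] at this
  omega

theorem IsNuPath.pathArea_le {ν μ : List ℕ} (h : IsNuPath ν μ) : pathArea μ ≤ pathArea ν := by
  rw [pathArea, pathArea, h.1]
  exact Finset.sum_le_sum fun j _ => h.2.1 j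

theorem one_le_getD_of_altitude_lt {ω μ : List ℕ} {i k : ℕ} (hik : i < k)
    (hak : altitude ω μ k < altitude ω μ i)
    (hmid : ∀ k', i < k' → k' < k → altitude ω μ i < altitude ω μ k') : 1 ≤ μ.getD k 0 := by
  obtain ⟨j, rfl⟩ : ∃ j, k = j + 1 := ⟨k - 1, by omega⟩
  have := altitude_succ ω μ j
  rcases (Nat.le_of_lt_succ hik).eq_or_lt with rfl | hij
  · omega
  · have := hmid j hij (by omega)
    omega

theorem isNuRotation_moveUnit {ω μ : List ℕ} {i k : ℕ} (hik : i < k) (hk : k < μ.length)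
    (hak : altitude ω μ k < altitude ω μ i)
    (hmid : ∀ k', i < k' → k' < k → altitude ω μ i < altitude ω μ k') :
    IsNuRotation ω (moveUnit μ k i) μ i := by
  have hμk := one_le_getD_of_altitude_lt hik hak hmid
  have hM := sum_take_moveUnit_of_gt hik hk hμk
  simp only [altitude] at hak hmid
  refine ⟨by simp only [length_moveUnit]; omega, ?_, k, hik, by simpa using hk, ?_,
    fun k' h₁ h₂ => ?_, (moveUnit_moveUnit hik.ne' hk (hik.trans hk) hμk).symm⟩
  · rw [getD_moveUnit hik.ne' hk (hik.trans hk), if_neg hik.ne, if_pos rfl]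
    omega
  · rw [hM, hM, if_pos (by omega), if_neg (by omega)]
    omega
  · have := hmid k' h₁ h₂
    rw [hM, hM, if_pos (by omega), if_pos (by omega)]
    omega

theorem IsNuPath.moveUnit_of_sum_take_lt {ν μ : List ℕ} {i k : ℕ} (hμ : IsNuPath ν μ) (hik : i < k)
    (hk : k < μ.length) (hμk : 1 ≤ μ.getD k 0)
    (hroom : ∀ j, i < j → j ≤ k → (μ.take j).sum < (ν.take j).sum) :
    IsNuPath ν (moveUnit μ k i) := by
  obtain ⟨hlen, hle, hsum⟩ := hμ
  have hM := sum_take_moveUnit_of_gt hik hk hμk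
  refine ⟨by simpa using hlen, fun j => ?_, ?_⟩
  · rw [hM]
    split_ifs with h
    · exact hroom j h.1 h.2
    · exact hle j
  · have := hM μ.length
    rw [List.take_of_length_le le_rfl, List.take_of_length_le (by simp), if_neg (by omega)] at this
    omega

theorem IsNuPath.exists_sum_take_lt {ν μ : List ℕ} (hμ : IsNuPath ν μ) (hne : μ ≠ ν) :
    ∃ i, i + 1 < μ.length ∧ (μ.take (i + 1)).sum < (ν.take (i + 1)).sum := by
  obtain ⟨hlen, hle, hsum⟩ := hμ
  by_contra! h
  refine hne (eq_of_sum_take_eq hlen fun j => le_antisymm (hle j) ?_)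
  rcases j with _ | j
  · simp
  rcases lt_or_ge (j + 1) μ.length with hj | hj
  · exact h j hj
  · rw [List.take_of_length_le hj, List.take_of_length_le (hlen ▸ hj), hsum]

theorem IsNuPath.exists_isNuRotation_of_ne {ω ν μ : List ℕ} (hμ : IsNuPath ν μ) (hne : μ ≠ ν)
    (hν : Antitone (altitude ω ν)) : ∃ μ', IsNuPath ν μ' ∧ ∃ i, IsNuRotation ω μ' μ i := by
  obtain ⟨i₀, hi₀, hgap⟩ := hμ.exists_sum_take_lt hne
  have hend : altitude ω μ (μ.length - 1) < altitude ω μ i₀ := by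
    have hν_le := hν (show i₀ ≤ μ.length - 1 by omega)
    have hlast : (μ.take μ.length).sum = (ν.take μ.length).sum := by
      rw [List.take_length, hμ.1, List.take_length, hμ.2.2]
    simp only [altitude, Nat.sub_add_cancel (by omega : 1 ≤ μ.length)] at hν_le ⊢
    omega
  obtain ⟨i, k, hi₀i, hik, hkn, hak, hmid, hk_min⟩ :=
    exists_excursion_of_lt (altitude ω μ) (by omega) hend
  have hkL : k < μ.length := by omega
  refine ⟨moveUnit μ k i, hμ.moveUnit_of_sum_take_lt hik hkL (one_le_getD_of_altitude_lt hik hak hmid)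
    fun j h₁ h₂ => ?_, i, isNuRotation_moveUnit hik hkL hak hmid⟩
  obtain ⟨j, rfl⟩ : ∃ j', j = j' + 1 := ⟨j - 1, by omega⟩
  have hμ_ge := hk_min j (by omega) (by omega)
  have hν_le := hν (show i₀ ≤ j by omega)
  simp only [altitude] at hμ_ge hν_le
  omega

theorem tamLE_of_isNuPath {ω ν μ : List ℕ} (hν : Antitone (altitude ω ν))
    (hμ : IsNuPath ν μ) : tamLE ω ν μ := by
  induction hd : pathArea ν - pathArea μ using Nat.strong_induction_on generalizing μ with
  | _ d ih =>
    by_cases hne : μ = ν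
    · exact hne ▸ Relation.ReflTransGen.refl
    obtain ⟨μ', hμ', i, hrot⟩ := hμ.exists_isNuRotation_of_ne hne hν
    have := hrot.pathArea_lt
    have := hμ'.pathArea_le
    exact (ih _ (by omega) hμ' rfl).tail ⟨i, hrot⟩

theorem sum_take_succ_nuCheck (ν δ : List ℕ) (j : ℕ) :
    ((nuCheck ν δ).take (j + 1)).sum = ν.sum - δ.sum + (δ.take j).sum := by
  simp [nuCheck]

theorem antitone_altitude_nuCheck {ν δ : List ℕ} (hδ : IsIncrement ν δ) :
    Antitone (altitude (nuCheck ν δ) ν) := by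
  refine antitone_nat_of_succ_le fun j => ?_
  have hδj : δ.getD j 0 ≤ ν.getD (j + 1) 0 := by
    rcases lt_or_ge j δ.length with h | h
    · exact hδ.2 j h
    · rw [List.getD_eq_default _ _ h]
      exact Nat.zero_le _
  rw [altitude_succ]
  simp only [nuCheck, List.getD_cons_succ]
  omega

theorem isDeltaRotation_iff_isNuRotation (ν δ P Q : List ℕ) (i : ℕ) :
    IsDeltaRotation δ P Q i ↔ IsNuRotation (nuCheck ν δ) P Q i := by
  have hsum : ∀ x, i ≤ x → ((nuCheck ν δ).take (x + 1)).sum + (P.take (i + 1)).sum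
      + ∑ t ∈ Finset.Ico (i + 1) (x + 1), P.getD t 0 =
      ((nuCheck ν δ).take (i + 1)).sum + (P.take (x + 1)).sum
      + ∑ t ∈ Finset.Ico i x, δ.getD t 0 := by
    intro x hx
    rw [sum_take_succ_nuCheck, sum_take_succ_nuCheck, ← sum_take_add_sum_Ico δ hx,
      ← sum_take_add_sum_Ico P (Nat.succ_le_succ hx)]
    ring
  refine and_congr_right fun _ => and_congr_right fun _ => exists_congr fun k => ?_
  constructor <;>
  · rintro ⟨hik, hk, hle, hlt, rfl⟩
    refine ⟨hik, hk, by have := hsum k hik.le; omega, fun k' h₁ h₂ => ?_, rfl⟩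
    have := hsum k' h₁.le
    have := hlt k' h₁ h₂
    omega

theorem altLE_eq_tamLE (ν δ : List ℕ) : altLE δ = tamLE (nuCheck ν δ) := by
  unfold altLE tamLE DRot
  simp only [isDeltaRotation_iff_isNuRotation ν]

theorem alt_tamari_is_interval_in_check_tamari_general (ν δ : List ℕ)
    (hδ : IsIncrement ν δ) :
    (∀ μ, IsNuPath (nuCheck ν δ) μ → (tamLE (nuCheck ν δ) ν μ ↔ IsNuPath ν μ)) ∧
    (∀ P Q, IsNuPath ν P → IsNuPath ν Q →
      (altLE δ P Q ↔ tamLE (nuCheck ν δ) P Q)) :=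
  ⟨fun _ _ => ⟨isNuPath_of_tamLE, tamLE_of_isNuPath (antitone_altitude_nuCheck hδ)⟩,
    fun _ _ _ _ => by rw [altLE_eq_tamLE ν]⟩

/-- The alt ν-Tamari poset `T_ν(δ)` is the interval `[ν, 1^ν]`
in the ν̌-Tamari lattice: a ν̌-path `μ` satisfies `ν ≤ μ` in `Tam(ν̌)` if and
only if `μ` is a ν-path, and for ν-paths `P, Q` one has `P ≤ Q` in `T_ν(δ)` if
and only if `P ≤ Q` in `Tam(ν̌)`. -/
theorem alt_tamari_is_interval_in_check_tamari (ν δ : List ℕ) (hν : ν ≠ [])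
    (hδ : IsIncrement ν δ) :
    (∀ μ, IsNuPath (nuCheck ν δ) μ → (tamLE (nuCheck ν δ) ν μ ↔ IsNuPath ν μ)) ∧
    (∀ P Q, IsNuPath ν P → IsNuPath ν Q →
      (altLE δ P Q ↔ tamLE (nuCheck ν δ) P Q)) :=
  alt_tamari_is_interval_in_check_tamari_general ν δ hδ
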